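/- Let G be a finite simple graph that is bipartite with bipartition (V, W), having no isolated vertices (every vertex lies on at least one edge) and unmixed. Then |V| = |W| and there exists a bijection φ : V → W such that {v, φ(v)} is an edge of G for every v ∈ V; that is, G has a perfect matching pairing V with W. -/

import Mathlib

/-!
Since `G` has no isolated vertices, both sides `V` and `W` are maximal independent sets, so
unmixedness gives `|V| = |W|`. For `A ⊆ V` with neighbourhood `N(A) ⊆ W`, the set
`A ∪ (W \ N(A))` is independent; extending it to a maximal independent set, which has `|W|`
elements, yields Hall's condition `|A| ≤ |N(A)|`, and Hall's marriage theorem gives the matching.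
-/

/-- A set of vertices is independent if no two of its elements are adjacent. -/
def IndepSet {α : Type*} (G : SimpleGraph α) (S : Finset α) : Prop :=
  ∀ ⦃u⦄, u ∈ S → ∀ ⦃v⦄, v ∈ S → ¬ G.Adj u v

/-- A maximal independent set: an independent set not properly contained in any
other independent set. -/
def MaxIndepSet {α : Type*} (G : SimpleGraph α) (S : Finset α) : Prop :=
  IndepSet G S ∧ ∀ ⦃T : Finset α⦄, IndepSet G T → S ⊆ T → T = S

/-- `G` is unmixed if all maximal independent sets have the same cardinality. -/
def Unmixed {α : Type*} (G : SimpleGraph α) : Prop :=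
  ∀ ⦃S T : Finset α⦄, MaxIndepSet G S → MaxIndepSet G T → S.card = T.card

/-- `(V, W)` is a bipartition of `G`: the vertex set is the disjoint union of `V` and `W`
and every edge joins a vertex of `V` to a vertex of `W`. -/
def IsBipartition {α : Type*} [Fintype α] [DecidableEq α]
    (G : SimpleGraph α) (V W : Finset α) : Prop :=
  Disjoint V W ∧ V ∪ W = Finset.univ ∧
    ∀ ⦃u v⦄, G.Adj u v → (u ∈ V ∧ v ∈ W) ∨ (u ∈ W ∧ v ∈ V)

open Finset

section IndepSet

variable {α : Type*} {G : SimpleGraph α}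

theorem maxIndepSet_iff_maximal {S : Finset α} : MaxIndepSet G S ↔ Maximal (IndepSet G) S :=
  and_congr_right fun _ =>
    ⟨fun h _ hT hST => (h hT hST).le, fun h _ hT hST => (h hT hST).antisymm hST⟩

theorem IndepSet.exists_maxIndepSet_superset [Finite α] {S : Finset α} (hS : IndepSet G S) :
    ∃ T, S ⊆ T ∧ MaxIndepSet G T := by
  obtain ⟨T, hST, hT⟩ := Finite.exists_le_maximal hS
  exact ⟨T, hST, maxIndepSet_iff_maximal.2 hT⟩

end IndepSet

namespace IsBipartition

variable {α : Type*} [Fintype α] [DecidableEq α] {G : SimpleGraph α} {V W : Finset α}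

theorem symm (h : IsBipartition G V W) : IsBipartition G W V :=
  ⟨h.1.symm, by rw [union_comm, h.2.1], fun _ _ huv => (h.2.2 huv).symm⟩

theorem mem_left_or_mem_right (h : IsBipartition G V W) (x : α) : x ∈ V ∨ x ∈ W :=
  mem_union.1 (h.2.1 ▸ mem_univ x)

theorem mem_right_of_adj (h : IsBipartition G V W) {v w : α} (hv : v ∈ V) (hvw : G.Adj v w) :
    w ∈ W :=
  (h.2.2 hvw).elim And.right fun hvW => absurd hvW.1 (disjoint_left.1 h.1 hv)

theorem indepSet_left (h : IsBipartition G V W) : IndepSet G V := fun _ hu _ hv huv =>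
  disjoint_left.1 h.1 hv (h.mem_right_of_adj hu huv)

theorem maxIndepSet_left (h : IsBipartition G V W) (hW : ∀ w ∈ W, ∃ v, G.Adj w v) :
    MaxIndepSet G V := by
  refine ⟨h.indepSet_left, fun T hT hVT => Subset.antisymm (fun x hxT => ?_) hVT⟩
  refine (h.mem_left_or_mem_right x).resolve_right fun hxW => ?_
  obtain ⟨v, hxv⟩ := hW x hxW
  exact hT hxT (hVT (h.symm.mem_right_of_adj hxW hxv)) hxv

theorem card_le_card_neighbors [DecidableRel G.Adj] (h : IsBipartition G V W)
    (hunmixed : Unmixed G) (hW : MaxIndepSet G W) {A : Finset α} (hA : A ⊆ V) :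
    #A ≤ #{w | ∃ a ∈ A, G.Adj a w} := by
  set N : Finset α := {w | ∃ a ∈ A, G.Adj a w}
  have hNW : N ⊆ W := fun w hw => by
    obtain ⟨a, ha, haw⟩ := (mem_filter.1 hw).2
    exact h.mem_right_of_adj (hA ha) haw
  have hindep : IndepSet G (A ∪ (W \ N)) := by
    have hN {a w} (ha : a ∈ A) (hw : w ∈ W \ N) : ¬ G.Adj a w := fun haw =>
      (mem_sdiff.1 hw).2 (mem_filter.2 ⟨mem_univ w, a, ha, haw⟩)
    intro u hu v hv
    rcases mem_union.1 hu with hu | hu <;> rcases mem_union.1 hv with hv | hv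
    · exact h.indepSet_left (hA hu) (hA hv)
    · exact hN hu hv
    · exact fun huv => hN hv hu huv.symm
    · exact h.symm.indepSet_left (mem_sdiff.1 hu).1 (mem_sdiff.1 hv).1
  obtain ⟨T, hsub, hT⟩ := hindep.exists_maxIndepSet_superset
  have hdisj : Disjoint A (W \ N) := h.1.mono hA sdiff_subset
  have hcard := card_le_card hsub
  rw [card_union_of_disjoint hdisj, card_sdiff_of_subset hNW, hunmixed hT hW] at hcard
  have := card_le_card hNW
  omega

theorem exists_bijOn_adj (h : IsBipartition G V W) (hunmixed : Unmixed G)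
    (hV : MaxIndepSet G V) (hW : MaxIndepSet G W) :
    ∃ φ : α → α, Set.BijOn φ V W ∧ ∀ v ∈ V, G.Adj v (φ v) := by
  classical
  have hall (A : Finset V) : #A ≤ #{w | ∃ a ∈ A, G.Adj a w} := by
    simpa using h.card_le_card_neighbors hunmixed hW (A := A.map (Function.Embedding.subtype _))
      fun _ ha => by obtain ⟨a, -, rfl⟩ := mem_map.1 ha; exact a.2
  obtain ⟨f, hf, hfadj⟩ :=
    (Fintype.all_card_le_filter_rel_iff_exists_injective fun (v : V) w => G.Adj v w).1 hall
  let φ (x : α) : α := if hx : x ∈ V then f ⟨x, hx⟩ else x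
  have hφadj : ∀ v ∈ V, G.Adj v (φ v) := fun v hv => by simpa [φ, hv] using hfadj ⟨v, hv⟩
  have hmaps : Set.MapsTo φ V W := fun v hv => h.mem_right_of_adj hv (hφadj v hv)
  have hinj : Set.InjOn φ V := fun u hu v hv huv => by
    rw [mem_coe] at hu hv
    simp only [φ, dif_pos hu, dif_pos hv] at huv
    exact congrArg Subtype.val (hf huv)
  refine ⟨φ, ⟨hmaps, hinj, ?_⟩, hφadj⟩
  exact surjOn_of_injOn_of_card_le φ hmaps hinj (hunmixed hW hV).le

end IsBipartition

/-- König-type fact (first step of the proof of Theorem 1.3, (a) ⇒ (b)): an unmixed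
bipartite graph with bipartition `(V, W)` and no isolated vertices satisfies `|V| = |W|`
and has a perfect matching pairing `V` with `W`. -/
theorem unmixed_bipartite_perfect_matching {α : Type*} [Fintype α] [DecidableEq α]
    (G : SimpleGraph α) (V W : Finset α)
    (hbip : IsBipartition G V W)
    (hiso : ∀ v : α, ∃ u, G.Adj v u)
    (hunmixed : Unmixed G) :
    V.card = W.card ∧
    ∃ φ : α → α, Set.BijOn φ ↑V ↑W ∧ ∀ v ∈ V, G.Adj v (φ v) := by
  have hV := hbip.maxIndepSet_left fun w _ => hiso w
  have hW := hbip.symm.maxIndepSet_left fun v _ => hiso v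
  exact ⟨hunmixed hV hW, hbip.exists_bijOn_adj hunmixed hV hW⟩
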